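/- Let l_1, l_2 be nonnegative integers and let c_l (−l_1 ≤ l ≤ l_2) be nonnegative reals with \sum_l c_l = 1. Define P(X) = \sum_{l=−l_1}^{l_2} c_l X^{l+l_1}, and assume P has no complex zero on the unit circle. Let N_0 be the number of zeros of P in the open unit disk counted with multiplicity. Then (−1)^{N_0 − l_1} equals the sign of \sum_l (−1)^l c_l. (This is the relation (−1)^{w(T,0)} = sgn ξ(π) for a one-dimensional stochastic matrix, using ξ(0) = 1.) -/

import Mathlib

/-!
Over `ℂ`, `P = a ∏ (X - r)` with `a` real, so `P(-1) P(1) = a² ∏ (r² - 1)`. The roots are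
stable under conjugation: real roots contribute `r² - 1`, negative exactly when `|r| < 1`, and a
pair `r, r̄` contributes `|r² - 1|² > 0` while adding `0` or `2` to the count of roots in the disk.
Hence `sgn (P(-1) P(1)) = (-1)^N₀`. Finally `P(1) = ∑ c_l = 1` and
`P(-1) = (-1)^l₁ ∑ (-1)^l c_l`.
-/

open Finset Polynomial
open scoped ComplexOrder ComplexConjugate

theorem Multiset.prod_map_ite_neg_one_one {α R : Type*} [CommRing R] (p : α → Prop)
    [DecidablePred p] (S : Multiset α) :
    (S.map fun a => if p a then (-1 : R) else 1).prod = (-1) ^ card (S.filter p) := by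
  induction S using Multiset.induction_on with
  | empty => simp
  | cons a S ih => by_cases ha : p a <;> simp [ha, ih, pow_succ, mul_comm]

theorem Multiset.prod_map_pos_of_map_conj_eq {S : Multiset ℂ} {h : ℂ → ℂ}
    (hS : S.map conj = S) (h_conj : ∀ z ∈ S, h (conj z) = conj (h z))
    (h_real : ∀ z ∈ S, conj z = z → 0 < h z) (h_ne : ∀ z ∈ S, h z ≠ 0) :
    0 < (S.map h).prod := by
  induction S using Multiset.strongInductionOn with
  | ih S ih =>
  have ih' : ∀ T < S, T.map conj = T → 0 < (T.map h).prod := fun T hT hTc =>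
    ih T hT hTc (fun z hz => h_conj z (subset_of_le hT.le hz))
      (fun z hz => h_real z (subset_of_le hT.le hz)) (fun z hz => h_ne z (subset_of_le hT.le hz))
  rcases S.empty_or_exists_mem with rfl | ⟨r, hr⟩
  · simp
  have h_erase : (S.erase r).map conj = (S.erase (conj r)) := by
    rw [map_erase _ (RingHom.injective _), hS]
  by_cases hr_real : conj r = r
  · rw [← cons_erase hr, map_cons, prod_cons]
    exact mul_pos (h_real r hr hr_real)
      (ih' _ (erase_lt.2 hr) (by rw [h_erase, hr_real]))
  · have hr_conj : conj r ∈ S.erase r := (mem_erase_of_ne hr_real).2 (hS ▸ mem_map_of_mem _ hr)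
    have h_pair : 0 < h r * h (conj r) := by
      rw [h_conj r hr, Complex.mul_conj, Complex.zero_lt_real, Complex.normSq_pos]
      exact h_ne r hr
    rw [← cons_erase hr, ← cons_erase hr_conj, map_cons, map_cons, prod_cons, prod_cons, ← mul_assoc]
    refine mul_pos h_pair (ih' _ ((erase_le _ _).trans_lt (erase_lt.2 hr)) ?_)
    rw [map_erase _ (RingHom.injective _), h_erase, Complex.conj_conj, erase_comm]

theorem Multiset.neg_one_pow_card_mul_prod_sq_sub_one_pos {S : Multiset ℂ}
    (hS : S.map conj = S) (h_circ : ∀ z ∈ S, ‖z‖ ≠ 1) :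
    0 < (-1) ^ card (S.filter (‖·‖ < 1)) * (S.map fun z => z ^ 2 - 1).prod := by
  set h : ℂ → ℂ := fun z => if ‖z‖ < 1 then 1 - z ^ 2 else z ^ 2 - 1
  have h_split : ∀ z, z ^ 2 - 1 = (if ‖z‖ < 1 then -1 else 1) * h z := by
    intro z; by_cases hz : ‖z‖ < 1 <;> simp [h, hz]
  rw [Multiset.map_congr rfl fun z _ => h_split z, prod_map_mul, prod_map_ite_neg_one_one,
    ← mul_assoc, ← pow_add, ← two_mul, pow_mul, neg_one_sq, one_pow, one_mul]
  refine prod_map_pos_of_map_conj_eq hS (fun z _ => ?_) (fun z hz hz_real => ?_) (fun z hz => ?_)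
  · by_cases hz : ‖z‖ < 1 <;> simp [h, hz]
  · obtain ⟨x, rfl⟩ : ∃ x : ℝ, (x : ℂ) = z := ⟨z.re, Complex.conj_eq_iff_re.1 hz_real⟩
    have hx : |x| ≠ 1 := by simpa using h_circ _ hz
    by_cases hx1 : |x| < 1
    · have : x ^ 2 < 1 := by nlinarith [sq_abs x, abs_nonneg x]
      simp only [h, Complex.norm_real, Real.norm_eq_abs, hx1, if_true]
      exact_mod_cast sub_pos.2 this
    · have : 1 < x ^ 2 := by nlinarith [sq_abs x, lt_of_le_of_ne (not_lt.1 hx1) hx.symm]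
      simp only [h, Complex.norm_real, Real.norm_eq_abs, hx1, if_false]
      exact_mod_cast sub_pos.2 this
  · intro hz0
    have hsq : z ^ 2 = 1 := sub_eq_zero.1 (by rw [h_split z, hz0, mul_zero])
    refine h_circ z hz ((pow_eq_one_iff_of_nonneg (norm_nonneg z) two_ne_zero).1 ?_)
    rw [← norm_pow, hsq, norm_one]

theorem Polynomial.map_conj_roots_map_ofReal (q : ℝ[X]) :
    (q.map (algebraMap ℝ ℂ)).roots.map conj = (q.map (algebraMap ℝ ℂ)).roots := by
  rw [← (IsAlgClosed.splits _).roots_map, Polynomial.map_map]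
  congr 2
  ext x
  simp

theorem Polynomial.neg_one_pow_mul_eval_neg_one_mul_eval_one_pos {q : ℝ[X]} (hq : q ≠ 0)
    (h_circ : ∀ z : ℂ, ‖z‖ = 1 → (q.map (algebraMap ℝ ℂ)).eval z ≠ 0) :
    0 < (-1) ^ Multiset.card ((q.map (algebraMap ℝ ℂ)).roots.filter (‖·‖ < 1)) *
      (q.eval (-1) * q.eval 1) := by
  set p := q.map (algebraMap ℝ ℂ)
  have hp : p ≠ 0 := (Polynomial.map_ne_zero_iff (algebraMap ℝ ℂ).injective).2 hq
  have h_cast (x : ℝ) : ((q.eval x : ℝ) : ℂ) = p.eval (x : ℂ) :=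
    (ofReal_eval q x).trans (eval_map_algebraMap q _).symm
  have h_eval : p.eval (-1) * p.eval 1 =
      (q.leadingCoeff : ℂ) ^ 2 * (p.roots.map fun z => z ^ 2 - 1).prod := by
    have hsplit := IsAlgClosed.splits p
    rw [hsplit.eval_eq_prod_roots, hsplit.eval_eq_prod_roots,
      leadingCoeff_map_of_injective (algebraMap ℝ ℂ).injective, mul_mul_mul_comm,
      ← Multiset.prod_map_mul, sq]
    congr 2
    exact Multiset.map_congr rfl fun z _ => by ring
  have h_roots : 0 < (-1) ^ Multiset.card (p.roots.filter (‖·‖ < 1)) *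
      (p.roots.map fun z => z ^ 2 - 1).prod :=
    Multiset.neg_one_pow_card_mul_prod_sq_sub_one_pos (map_conj_roots_map_ofReal q)
      fun z hz h1 => h_circ z h1 ((mem_roots hp).1 hz)
  have hlead : 0 < q.leadingCoeff ^ 2 := by
    have := leadingCoeff_ne_zero.2 hq
    positivity
  rw [← Complex.zero_lt_real]
  push_cast
  rw [h_cast, h_cast, Complex.ofReal_neg, Complex.ofReal_one, h_eval, mul_left_comm]
  exact mul_pos (by exact_mod_cast hlead) h_roots

theorem Real.sign_eq_neg_one_zpow_of_pos {x : ℝ} {k : ℤ} (h : 0 < (-1) ^ k * x) :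
    Real.sign x = (-1) ^ k := by
  rcases k.even_or_odd with hk | hk
  · rw [hk.neg_one_zpow, one_mul] at h
    rw [hk.neg_one_zpow, Real.sign_of_pos h]
  · rw [hk.neg_one_zpow, neg_one_mul, neg_pos] at h
    rw [hk.neg_one_zpow, Real.sign_of_neg h]

/-- The polynomial `z ^ l₁ * ξ z`. -/
noncomputable def shiftedSymbol (l₁ l₂ : ℕ) (c : ℤ → ℝ) : ℝ[X] :=
  ∑ l ∈ Icc (-(l₁ : ℤ)) l₂, C (c l) * X ^ (l + l₁).toNat

theorem map_ofReal_shiftedSymbol (l₁ l₂ : ℕ) (c : ℤ → ℝ) :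
    (shiftedSymbol l₁ l₂ c).map (algebraMap ℝ ℂ) =
      ∑ l ∈ Icc (-(l₁ : ℤ)) l₂, C (c l : ℂ) * X ^ (l + l₁).toNat := by
  simp [shiftedSymbol, Polynomial.map_sum]

theorem eval_one_shiftedSymbol (l₁ l₂ : ℕ) (c : ℤ → ℝ) :
    (shiftedSymbol l₁ l₂ c).eval 1 = ∑ l ∈ Icc (-(l₁ : ℤ)) l₂, c l := by
  simp [shiftedSymbol, eval_finsetSum]

theorem eval_neg_one_shiftedSymbol (l₁ l₂ : ℕ) (c : ℤ → ℝ) :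
    (shiftedSymbol l₁ l₂ c).eval (-1) =
      (-1) ^ l₁ * ∑ l ∈ Icc (-(l₁ : ℤ)) l₂, (-1) ^ l * c l := by
  rw [shiftedSymbol, eval_finsetSum, mul_sum]
  refine sum_congr rfl fun l hl => ?_
  have hl₀ : 0 ≤ l + l₁ := by linarith [(mem_Icc.1 hl).1]
  rw [eval_mul, eval_C, eval_pow, eval_X, ← zpow_natCast, Int.toNat_of_nonneg hl₀,
    zpow_add₀ (by norm_num), zpow_natCast]
  ring

theorem parity_of_winding_general (l₁ l₂ : ℕ) (c : ℤ → ℝ)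
    (hsum : ∑ l ∈ Finset.Icc (-(l₁ : ℤ)) (l₂ : ℤ), c l = 1)
    (hcirc : ∀ z : ℂ, ‖z‖ = 1 →
      Polynomial.eval z (∑ l ∈ Finset.Icc (-(l₁ : ℤ)) (l₂ : ℤ),
        Polynomial.C ((c l : ℂ)) * Polynomial.X ^ (l + l₁).toNat) ≠ 0) :
    ((-1 : ℝ)) ^ ((Multiset.card ((∑ l ∈ Finset.Icc (-(l₁ : ℤ)) (l₂ : ℤ),
        Polynomial.C ((c l : ℂ)) * Polynomial.X ^ (l + l₁).toNat).roots.filter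
          (fun z => ‖z‖ < 1)) : ℤ) - (l₁ : ℤ))
      = Real.sign (∑ l ∈ Finset.Icc (-(l₁ : ℤ)) (l₂ : ℤ), (-1 : ℝ) ^ l * c l) := by
  rw [← map_ofReal_shiftedSymbol] at hcirc ⊢
  have h_one : (shiftedSymbol l₁ l₂ c).eval 1 = 1 := by rw [eval_one_shiftedSymbol, hsum]
  have h_ne : shiftedSymbol l₁ l₂ c ≠ 0 := fun h => by simp [h] at h_one
  have h_pos := neg_one_pow_mul_eval_neg_one_mul_eval_one_pos h_ne hcirc
  rw [h_one, mul_one, eval_neg_one_shiftedSymbol, ← mul_assoc] at h_pos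
  refine (Real.sign_eq_neg_one_zpow_of_pos ?_).symm
  rwa [zpow_sub₀ (by norm_num), zpow_natCast, zpow_natCast, div_eq_mul_inv, ← inv_pow, inv_neg_one]

/-- Parity of the winding number of a one-dimensional stochastic matrix: with
`P(X) = ∑ c l * X^(l+l₁)` having no zero on the unit circle and `N₀` zeros in the open
unit disk, one has `(-1)^(N₀ - l₁) = sgn (∑ (-1)^l c l)`, i.e.
`(-1)^{w(T,0)} = sgn ξ(π)`. -/
theorem parity_of_winding (l₁ l₂ : ℕ) (c : ℤ → ℝ)
    (hnn : ∀ l ∈ Finset.Icc (-(l₁ : ℤ)) (l₂ : ℤ), 0 ≤ c l)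
    (hsum : ∑ l ∈ Finset.Icc (-(l₁ : ℤ)) (l₂ : ℤ), c l = 1)
    (hcirc : ∀ z : ℂ, ‖z‖ = 1 →
      Polynomial.eval z (∑ l ∈ Finset.Icc (-(l₁ : ℤ)) (l₂ : ℤ),
        Polynomial.C ((c l : ℂ)) * Polynomial.X ^ (l + l₁).toNat) ≠ 0) :
    ((-1 : ℝ)) ^ ((Multiset.card ((∑ l ∈ Finset.Icc (-(l₁ : ℤ)) (l₂ : ℤ),
        Polynomial.C ((c l : ℂ)) * Polynomial.X ^ (l + l₁).toNat).roots.filter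
          (fun z => ‖z‖ < 1)) : ℤ) - (l₁ : ℤ))
      = Real.sign (∑ l ∈ Finset.Icc (-(l₁ : ℤ)) (l₂ : ℤ), (-1 : ℝ) ^ l * c l) :=
  parity_of_winding_general l₁ l₂ c hsum hcirc
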